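/- arXiv:1706.04176 — 5 statements merged into one kernel-verified Lean document; each statement's English description precedes it below -/
import Mathlib

section
/- Let I and J be finite index sets, let p̄ ∈ ℝ, and let g : I → ℝ, h : J → ℝ be given values. Suppose x̄ : I → ℝ and ȳ : J → ℝ satisfy x̄ i ∈ [α'_i, α''_i], ȳ j ∈ [β'_j, β''_j], and the complementarity conditions: g i ≥ p̄ if x̄ i = α'_i, g i = p̄ if α'_i < x̄ i < α''_i, g i ≤ p̄ if x̄ i = α''_i; and h j ≤ p̄ if ȳ j = β'_j, h j = p̄ if β'_j < ȳ j < β''_j, h j ≥ p̄ if ȳ j = β''_j. Then for every x : I → ℝ and y : J → ℝ with x i ∈ [α'_i, α''_i], y j ∈ [β'_j, β''_j], and ∑_i x i − ∑_j y j = ∑_i x̄ i − ∑_j ȳ j, it holds that ∑_i g i · (x i − x̄ i) − ∑_j h j · (y j − ȳ j) ≥ 0. -/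
theorem market_equilibrium_implies_VI
    {I J : Type*} [Fintype I] [Fintype J]
    (α' α'' : I → ℝ) (β' β'' : J → ℝ) (pb : ℝ)
    (g : I → ℝ) (h : J → ℝ) (xb : I → ℝ) (yb : J → ℝ)
    (hxb : ∀ i, xb i ∈ Set.Icc (α' i) (α'' i))
    (hyb : ∀ j, yb j ∈ Set.Icc (β' j) (β'' j))
    (hg1 : ∀ i, xb i = α' i → g i ≥ pb)
    (hg2 : ∀ i, α' i < xb i → xb i < α'' i → g i = pb)
    (hg3 : ∀ i, xb i = α'' i → g i ≤ pb)
    (hh1 : ∀ j, yb j = β' j → h j ≤ pb)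
    (hh2 : ∀ j, β' j < yb j → yb j < β'' j → h j = pb)
    (hh3 : ∀ j, yb j = β'' j → h j ≥ pb) :
    ∀ (x : I → ℝ) (y : J → ℝ),
      (∀ i, x i ∈ Set.Icc (α' i) (α'' i)) →
      (∀ j, y j ∈ Set.Icc (β' j) (β'' j)) →
      (∑ i, x i) - (∑ j, y j) = (∑ i, xb i) - (∑ j, yb j) →
      (∑ i, g i * (x i - xb i)) - (∑ j, h j * (y j - yb j)) ≥ 0 := by
  intro x y hx hy hbal
  have hxi : ∀ i, (g i - pb) * (x i - xb i) ≥ 0 := by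
    intro i
    rcases lt_trichotomy (xb i) (α'' i) with hlt | heq | hgt
    · rcases lt_trichotomy (α' i) (xb i) with hlt' | heq' | hgt'
      · rw [hg2 i hlt' hlt]; simp
      · have := hg1 i heq'.symm
        have hxa : x i - xb i ≥ 0 := by
          have := (hx i).1; rw [← heq']; linarith
        nlinarith
      · exact absurd (hxb i).1 (not_le.mpr hgt')
    · have := hg3 i heq
      have hxa : x i - xb i ≤ 0 := by
        have := (hx i).2; rw [heq]; linarith
      nlinarith
    · exact absurd (hxb i).2 (not_le.mpr hgt)
  have hyj : ∀ j, (h j - pb) * (y j - yb j) ≤ 0 := by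
    intro j
    rcases lt_trichotomy (yb j) (β'' j) with hlt | heq | hgt
    · rcases lt_trichotomy (β' j) (yb j) with hlt' | heq' | hgt'
      · rw [hh2 j hlt' hlt]; simp
      · have := hh1 j heq'.symm
        have hya : y j - yb j ≥ 0 := by
          have := (hy j).1; rw [← heq']; linarith
        nlinarith
      · exact absurd (hyb j).1 (not_le.mpr hgt')
    · have := hh3 j heq
      have hya : y j - yb j ≤ 0 := by
        have := (hy j).2; rw [heq]; linarith
      nlinarith
    · exact absurd (hyb j).2 (not_le.mpr hgt)
  have h1 : ∑ i, (g i - pb) * (x i - xb i) ≥ 0 :=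
    Finset.sum_nonneg fun i _ => hxi i
  have h2 : ∑ j, (h j - pb) * (y j - yb j) ≤ 0 :=
    Finset.sum_nonpos fun j _ => hyj j
  have e1 : ∑ i, g i * (x i - xb i)
      = ∑ i, (g i - pb) * (x i - xb i) + pb * ((∑ i, x i) - ∑ i, xb i) := by
    rw [mul_sub, Finset.mul_sum, Finset.mul_sum, ← Finset.sum_sub_distrib,
      ← Finset.sum_add_distrib]
    exact Finset.sum_congr rfl fun i _ => by ring
  have e2 : ∑ j, h j * (y j - yb j)
      = ∑ j, (h j - pb) * (y j - yb j) + pb * ((∑ j, y j) - ∑ j, yb j) := by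
    rw [mul_sub, Finset.mul_sum, Finset.mul_sum, ← Finset.sum_sub_distrib,
      ← Finset.sum_add_distrib]
    exact Finset.sum_congr rfl fun j _ => by ring
  rw [e1, e2]
  have heq : (∑ i, x i) - ∑ i, xb i = (∑ j, y j) - ∑ j, yb j := by linarith
  rw [heq]
  linarith
end

section
/- Let P and B be finite nonempty index sets, g : P → ℝ and h : B → ℝ fixed real numbers, and x* : P → ℝ≥0, y* : B → ℝ≥0 with ∑_{p∈P} x* p = ∑_{j∈B} y* j. Suppose for all p ∈ P and j ∈ B: if x* p > 0 and y* j > 0 then g p = h j, and if x* p = 0 or y* j = 0 then g p ≥ h j. Then there exists λ ∈ ℝ such that g p ≥ λ for all p with x* p = 0, g p = λ for all p with x* p > 0, h j ≤ λ for all j with y* j = 0, and h j = λ for all j with y* j > 0. -/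
theorem wardrop_implies_equilibrium
    {P B : Type*} [Fintype P] [Fintype B] [Nonempty P] [Nonempty B]
    (g : P → ℝ) (h : B → ℝ) (xs : P → ℝ) (ys : B → ℝ)
    (hx : ∀ p, 0 ≤ xs p) (hy : ∀ j, 0 ≤ ys j)
    (hbal : ∑ p, xs p = ∑ j, ys j)
    (hW : ∀ p j, (xs p > 0 → ys j > 0 → g p = h j) ∧
      (xs p = 0 ∨ ys j = 0 → g p ≥ h j)) :
    ∃ lam : ℝ,
      (∀ p, xs p = 0 → g p ≥ lam) ∧ (∀ p, xs p > 0 → g p = lam) ∧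
      (∀ j, ys j = 0 → h j ≤ lam) ∧ (∀ j, ys j > 0 → h j = lam) := by
  by_cases hall : ∀ p, xs p = 0
  · -- all xs zero, hence all ys zero
    have hsum : ∑ j, ys j = 0 := by
      rw [← hbal]; exact Finset.sum_eq_zero fun p _ => hall p
    have hally : ∀ j, ys j = 0 := by
      intro j
      have := (Finset.sum_eq_zero_iff_of_nonneg (fun j _ => hy j)).mp hsum
      exact this j (Finset.mem_univ j)
    obtain ⟨j0, hj0⟩ := Finset.exists_max_image Finset.univ h Finset.univ_nonempty
    refine ⟨h j0, ?_, ?_, ?_, ?_⟩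
    · intro p _; exact (hW p j0).2 (Or.inl (hall p))
    · intro p hp; exact absurd (hall p) (ne_of_gt hp)
    · intro j _; exact hj0.2 j (Finset.mem_univ j)
    · intro j hj; exact absurd (hally j) (ne_of_gt hj)
  · push_neg at hall
    obtain ⟨p0, hp0⟩ := hall
    have hp0pos : 0 < xs p0 := lt_of_le_of_ne (hx p0) (Ne.symm hp0)
    have hsumpos : 0 < ∑ j, ys j := by
      rw [← hbal]
      exact Finset.sum_pos' (fun p _ => hx p) ⟨p0, Finset.mem_univ p0, hp0pos⟩
    have : ∃ j0, 0 < ys j0 := by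
      by_contra hc
      push_neg at hc
      have : ∑ j, ys j = 0 := Finset.sum_eq_zero fun j _ => le_antisymm (hc j) (hy j)
      linarith
    obtain ⟨j0, hj0⟩ := this
    refine ⟨g p0, ?_, ?_, ?_, ?_⟩
    · intro p hp
      have := (hW p j0).2 (Or.inl hp)
      have h2 := (hW p0 j0).1 hp0pos hj0
      linarith
    · intro p hp
      rw [(hW p j0).1 hp hj0, (hW p0 j0).1 hp0pos hj0]
    · intro j hj
      exact (hW p0 j).2 (Or.inr hj)
    · intro j hj
      exact ((hW p0 j).1 hp0pos hj).symm
end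

section
/- Let P and B be finite nonempty index sets, γ : B → ℝ≥0, g : P → ℝ, h : B → ℝ fixed values, and let W = { (x,y) : x p ≥ 0 for p ∈ P, 0 ≤ y j ≤ γ j for j ∈ B, ∑_p x p = ∑_j y j }. Suppose (x*, y*) ∈ W and there exists λ ∈ ℝ such that: g p ≥ λ if x* p = 0 and g p = λ if x* p > 0, for all p ∈ P; and h j ≤ λ if y* j = 0, h j = λ if 0 < y* j < γ j, h j ≥ λ if y* j = γ j, for all j ∈ B. Then ∑_p g p (x p − x* p) − ∑_j h j (y j − y* j) ≥ 0 for all (x,y) ∈ W. -/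
theorem network_equilibrium_implies_VI
    {P B : Type*} [Fintype P] [Fintype B] [Nonempty P] [Nonempty B]
    (γ : B → ℝ) (hγ : ∀ j, 0 ≤ γ j)
    (g : P → ℝ) (h : B → ℝ) (xs : P → ℝ) (ys : B → ℝ)
    (hx : ∀ p, 0 ≤ xs p) (hy : ∀ j, ys j ∈ Set.Icc 0 (γ j))
    (hbal : ∑ p, xs p = ∑ j, ys j)
    (lam : ℝ)
    (hg1 : ∀ p, xs p = 0 → g p ≥ lam) (hg2 : ∀ p, xs p > 0 → g p = lam)
    (hh1 : ∀ j, ys j = 0 → h j ≤ lam)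
    (hh2 : ∀ j, 0 < ys j → ys j < γ j → h j = lam)
    (hh3 : ∀ j, ys j = γ j → h j ≥ lam) :
    ∀ (x : P → ℝ) (y : B → ℝ), (∀ p, 0 ≤ x p) →
      (∀ j, y j ∈ Set.Icc 0 (γ j)) → (∑ p, x p = ∑ j, y j) →
      (∑ p, g p * (x p - xs p)) - (∑ j, h j * (y j - ys j)) ≥ 0 := by
  intro x y hxp hyj hbal'
  have h1 : ∑ p, g p * (x p - xs p) ≥ ∑ p, lam * (x p - xs p) := by
    apply Finset.sum_le_sum
    intro p _
    rcases eq_or_lt_of_le (hx p) with h0 | h0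
    · have := hg1 p h0.symm
      have hxnn : 0 ≤ x p - xs p := by rw [← h0]; simpa using hxp p
      exact mul_le_mul_of_nonneg_right this hxnn
    · rw [hg2 p h0]
  have h2 : ∑ j, h j * (y j - ys j) ≤ ∑ j, lam * (y j - ys j) := by
    apply Finset.sum_le_sum
    intro j _
    obtain ⟨hy0, hy1⟩ := hy j
    rcases eq_or_lt_of_le hy0 with h0 | h0
    · have := hh1 j h0.symm
      have : h j ≤ lam := this
      have hynn : 0 ≤ y j - ys j := by rw [← h0]; simpa using (hyj j).1
      exact mul_le_mul_of_nonneg_right this hynn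
    · rcases eq_or_lt_of_le hy1 with h1' | h1'
      · have := hh3 j h1'
        have hynp : y j - ys j ≤ 0 := by
          rw [h1']; simpa using (hyj j).2
        nlinarith [this]
      · rw [hh2 j h0 h1']
  have hsum : ∑ p, lam * (x p - xs p) = ∑ j, lam * (y j - ys j) := by
    rw [← Finset.mul_sum, ← Finset.mul_sum, Finset.sum_sub_distrib, Finset.sum_sub_distrib,
      hbal, hbal']
  linarith
end

section
/- Let P and B be finite nonempty index sets, γ : B → ℝ with γ j > 0, g : P → ℝ, h : B → ℝ, and W = { (x,y) : x p ≥ 0, 0 ≤ y j ≤ γ j, ∑_p x p = ∑_j y j }. Suppose (x*, y*) ∈ W satisfies ∑_p g p (x p − x* p) − ∑_j h j (y j − y* j) ≥ 0 for all (x,y) ∈ W. Then there exists λ ∈ ℝ such that g p ≥ λ if x* p = 0, g p = λ if x* p > 0 (for all p), and h j ≤ λ if y* j = 0, h j = λ if 0 < y* j < γ j, h j ≥ λ if y* j = γ j (for all j). -/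
theorem network_VI_implies_equilibrium
    {P B : Type*} [Fintype P] [Fintype B] [Nonempty P] [Nonempty B]
    (γ : B → ℝ) (hγ : ∀ j, 0 < γ j)
    (g : P → ℝ) (h : B → ℝ) (xs : P → ℝ) (ys : B → ℝ)
    (hx : ∀ p, 0 ≤ xs p) (hy : ∀ j, ys j ∈ Set.Icc 0 (γ j))
    (hbal : ∑ p, xs p = ∑ j, ys j)
    (hVI : ∀ (x : P → ℝ) (y : B → ℝ), (∀ p, 0 ≤ x p) →
      (∀ j, y j ∈ Set.Icc 0 (γ j)) → (∑ p, x p = ∑ j, y j) →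
      (∑ p, g p * (x p - xs p)) - (∑ j, h j * (y j - ys j)) ≥ 0) :
    ∃ lam : ℝ,
      (∀ p, xs p = 0 → g p ≥ lam) ∧ (∀ p, xs p > 0 → g p = lam) ∧
      (∀ j, ys j = 0 → h j ≤ lam) ∧
      (∀ j, 0 < ys j → ys j < γ j → h j = lam) ∧
      (∀ j, ys j = γ j → h j ≥ lam) := by
  classical
  -- path-path exchange: if xs p1 > 0 then g p1 ≤ g p2
  have keyP : ∀ p1 p2 : P, 0 < xs p1 → g p1 ≤ g p2 := by
    intro p1 p2 hpos
    by_cases hpp : p1 = p2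
    · subst hpp; exact le_rfl
    have hpp' : p2 ≠ p1 := fun e => hpp e.symm
    set ε := xs p1 with hεdef
    have hx' : ∀ q, 0 ≤ xs q - (if q = p1 then ε else 0) + (if q = p2 then ε else 0) := by
      intro q
      by_cases h1 : q = p1
      · subst h1
        simp [hpp, hεdef]
      · by_cases h2 : q = p2
        · subst h2; simp [hpp']; linarith [hx q, hpos]
        · simp [h1, h2]; exact hx q
    have hsum : ∑ q, (xs q - (if q = p1 then ε else 0) + (if q = p2 then ε else 0)) = ∑ j, ys j := by
      rw [Finset.sum_add_distrib, Finset.sum_sub_distrib]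
      simp [hbal]
    have h1 := hVI _ ys hx' hy hsum
    have hcalc : (∑ q, g q * ((xs q - (if q = p1 then ε else 0) + (if q = p2 then ε else 0)) - xs q))
        = ε * g p2 - ε * g p1 := by
      have hpt : ∀ q, g q * ((xs q - (if q = p1 then ε else 0) + (if q = p2 then ε else 0)) - xs q)
          = (if q = p2 then g q * ε else 0) - (if q = p1 then g q * ε else 0) := by
        intro q
        by_cases h1 : q = p1
        · subst h1; simp [hpp]
        · by_cases h2 : q = p2
          · subst h2; simp [hpp']
          · simp [h1, h2]
      rw [Finset.sum_congr rfl (fun q _ => hpt q), Finset.sum_sub_distrib]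
      simp [Finset.sum_ite_eq']; ring
    rw [hcalc] at h1
    simp only [sub_self, mul_zero, Finset.sum_const_zero, sub_zero] at h1
    nlinarith
  -- coupling up: if ys j < γ j then h j ≤ g p
  have keyUp : ∀ (p : P) (j : B), ys j < γ j → h j ≤ g p := by
    intro p j hlt
    set ε := γ j - ys j with hεdef
    have hε : 0 < ε := by simp only [hεdef]; linarith
    have hx' : ∀ q, 0 ≤ xs q + (if q = p then ε else 0) := by
      intro q; by_cases hq : q = p
      · subst hq; simp; linarith [hx q]
      · simp [hq]; exact hx q
    have hy' : ∀ k, ys k + (if k = j then ε else 0) ∈ Set.Icc 0 (γ k) := by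
      intro k
      by_cases hk : k = j
      · subst hk
        constructor
        · simp [hεdef]; linarith [(hy k).1]
        · simp [hεdef]
      · simpa [hk] using hy k
    have hsum : ∑ q, (xs q + (if q = p then ε else 0)) = ∑ k, (ys k + (if k = j then ε else 0)) := by
      rw [Finset.sum_add_distrib, Finset.sum_add_distrib]
      simp [hbal]
    have h1 := hVI _ _ hx' hy' hsum
    have hc1 : (∑ q, g q * ((xs q + (if q = p then ε else 0)) - xs q)) = g p * ε := by
      have hpt : ∀ q, g q * ((xs q + (if q = p then ε else 0)) - xs q)
          = (if q = p then g q * ε else 0) := by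
        intro q; by_cases hq : q = p <;> simp [hq]
      rw [Finset.sum_congr rfl (fun q _ => hpt q)]
      simp [Finset.sum_ite_eq']
    have hc2 : (∑ k, h k * ((ys k + (if k = j then ε else 0)) - ys k)) = h j * ε := by
      have hpt : ∀ k, h k * ((ys k + (if k = j then ε else 0)) - ys k)
          = (if k = j then h k * ε else 0) := by
        intro k; by_cases hk : k = j <;> simp [hk]
      rw [Finset.sum_congr rfl (fun k _ => hpt k)]
      simp [Finset.sum_ite_eq']
    rw [hc1, hc2] at h1
    nlinarith
  -- coupling down: if xs p > 0 and ys j > 0 then g p ≤ h j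
  have keyDown : ∀ (p : P) (j : B), 0 < xs p → 0 < ys j → g p ≤ h j := by
    intro p j hxp hyj
    set ε := min (xs p) (ys j) with hεdef
    have hε : 0 < ε := lt_min hxp hyj
    have hx' : ∀ q, 0 ≤ xs q - (if q = p then ε else 0) := by
      intro q
      by_cases hq : q = p
      · subst hq; simp [hεdef]
      · simp [hq]; exact hx q
    have hy' : ∀ k, ys k - (if k = j then ε else 0) ∈ Set.Icc 0 (γ k) := by
      intro k
      by_cases hk : k = j
      · subst hk
        constructor
        · simp [hεdef]
        · simp; have := (hy k).2; linarith
      · simpa [hk] using hy k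
    have hsum : ∑ q, (xs q - (if q = p then ε else 0)) = ∑ k, (ys k - (if k = j then ε else 0)) := by
      rw [Finset.sum_sub_distrib, Finset.sum_sub_distrib]
      simp [hbal]
    have h1 := hVI _ _ hx' hy' hsum
    have hc1 : (∑ q, g q * ((xs q - (if q = p then ε else 0)) - xs q)) = -(g p * ε) := by
      have hpt : ∀ q, g q * ((xs q - (if q = p then ε else 0)) - xs q)
          = -(if q = p then g q * ε else 0) := by
        intro q; by_cases hq : q = p <;> simp [hq]
      rw [Finset.sum_congr rfl (fun q _ => hpt q)]
      rw [Finset.sum_neg_distrib]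
      simp [Finset.sum_ite_eq']
    have hc2 : (∑ k, h k * ((ys k - (if k = j then ε else 0)) - ys k)) = -(h j * ε) := by
      have hpt : ∀ k, h k * ((ys k - (if k = j then ε else 0)) - ys k)
          = -(if k = j then h k * ε else 0) := by
        intro k; by_cases hk : k = j <;> simp [hk]
      rw [Finset.sum_congr rfl (fun k _ => hpt k)]
      rw [Finset.sum_neg_distrib]
      simp [Finset.sum_ite_eq']
    rw [hc1, hc2] at h1
    nlinarith
  by_cases hT : ∃ p0, 0 < xs p0
  · obtain ⟨p0, hp0⟩ := hT
    refine ⟨g p0, ?_, ?_, ?_, ?_, ?_⟩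
    · intro p _; exact keyP p0 p hp0
    · intro p hp; exact le_antisymm (keyP p p0 hp) (keyP p0 p hp0)
    · intro j hj
      have : ys j < γ j := by rw [hj]; exact hγ j
      exact keyUp p0 j this
    · intro j hj1 hj2
      exact le_antisymm (keyUp p0 j hj2) (keyDown p0 j hp0 hj1)
    · intro j hj
      have : 0 < ys j := by rw [hj]; exact hγ j
      exact keyDown p0 j hp0 this
  · push_neg at hT
    have hxz : ∀ p, xs p = 0 := fun p => le_antisymm (hT p) (hx p)
    have hsum0 : ∑ j, ys j = 0 := by rw [← hbal]; simp [hxz]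
    have hyz : ∀ j, ys j = 0 := by
      intro j
      have := (Finset.sum_eq_zero_iff_of_nonneg (fun k _ => (hy k).1)).mp hsum0
      exact this j (Finset.mem_univ j)
    refine ⟨Finset.univ.sup' Finset.univ_nonempty h, ?_, ?_, ?_, ?_, ?_⟩
    · intro p _
      obtain ⟨j, _, hj⟩ := Finset.exists_mem_eq_sup' Finset.univ_nonempty h
      rw [hj]
      have : ys j < γ j := by rw [hyz j]; exact hγ j
      exact keyUp p j this
    · intro p hp; exact absurd hp (by simp [hxz p])
    · intro j _; exact Finset.le_sup' h (Finset.mem_univ j)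
    · intro j hj _; exact absurd hj (by simp [hyz j])
    · intro j hj
      exact absurd (hγ j) (by rw [← hj, hyz j]; simp)
end

section
/- Let W ⊆ ℝ^m be convex, μ : ℝ^m → ℝ differentiable convex, η : ℝ^m → ℝ convex. Fix w ∈ W and let v ∈ W minimize the function u ↦ ⟨∇μ(w), u⟩ + η(u) over W. If v ≠ w and φ(w) := ⟨∇μ(w), w − v⟩ + η(w) − η(v) > 0, then the direction p = v − w is a descent direction for f = μ + η at w in the sense that the directional derivative satisfies f'(w; p) ≤ −φ(w) < 0. -/
/-! Along the segment from `w` to `v`, convexity bounds every difference quotient of `η` by the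
chord slope `η v - η w`, while those of `μ` tend to `⟪∇μ w, v - w⟫`. In the limit,
`f'(w; v - w) ≤ ⟪∇μ w, v - w⟫ + η v - η w = -φ(w)`. -/

open RealInnerProductSpace Filter Topology

theorem ConvexOn.slope_le_sub_of_mem_Ioc {E : Type*} [AddCommGroup E] [Module ℝ E]
    {s : Set E} {η : E → ℝ} (hη : ConvexOn ℝ s η) {w v : E} (hw : w ∈ s) (hv : v ∈ s)
    {t : ℝ} (ht : t ∈ Set.Ioc 0 1) :
    (η (w + t • (v - w)) - η w) / t ≤ η v - η w := by
  obtain ⟨ht0, ht1⟩ := ht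
  have hpoint : (1 - t) • w + t • v = w + t • (v - w) := by module
  have hchord : η (w + t • (v - w)) ≤ (1 - t) * η w + t * η v := by
    simpa only [hpoint, smul_eq_mul] using
      hη.2 hw hv (sub_nonneg.mpr ht1) ht0.le (sub_add_cancel 1 t)
  rw [div_le_iff₀ ht0]
  linarith

theorem HasLineDerivAt.le_of_tendsto_slope_add_convexOn {E : Type*} [NormedAddCommGroup E]
    [NormedSpace ℝ E] {μ η : E → ℝ} {s : Set E} {w v : E} {d fd : ℝ}
    (hμ : HasLineDerivAt ℝ μ d w (v - w)) (hη : ConvexOn ℝ s η) (hw : w ∈ s) (hv : v ∈ s)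
    (hfd : Tendsto (fun t : ℝ => ((μ (w + t • (v - w)) + η (w + t • (v - w))) - (μ w + η w)) / t)
      (𝓝[>] 0) (𝓝 fd)) :
    fd ≤ d + (η v - η w) := by
  have hμslope : Tendsto (fun t : ℝ => (μ (w + t • (v - w)) - μ w) / t) (𝓝[>] 0) (𝓝 d) := by
    simpa only [smul_eq_mul, div_eq_inv_mul] using hμ.tendsto_slope_zero_right
  have hsmall : ∀ᶠ t in 𝓝[>] (0 : ℝ), t ∈ Set.Ioc 0 1 :=
    Ioc_mem_nhdsGT zero_lt_one
  refine le_of_tendsto_of_tendsto hfd (hμslope.add_const (η v - η w)) ?_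
  filter_upwards [hsmall] with t ht
  have hηslope := hη.slope_le_sub_of_mem_Ioc hw hv ht
  rw [add_sub_add_comm, add_div]
  linarith

theorem PL_descent_direction_general
    {m : ℕ}
    (μ η : EuclideanSpace ℝ (Fin m) → ℝ)
    (μ' : EuclideanSpace ℝ (Fin m) → EuclideanSpace ℝ (Fin m))
    (hμ : ∀ x, HasGradientAt μ (μ' x) x)
    (hηconv : ConvexOn ℝ Set.univ η)
    (w v : EuclideanSpace ℝ (Fin m))
    (φw : ℝ) (hφw : φw = (inner ℝ (μ' w) (w - v) : ℝ) + η w - η v) (hφpos : φw > 0)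
    (fd : ℝ)
    (hfd : Filter.Tendsto
      (fun t : ℝ => ((μ (w + t • (v - w)) + η (w + t • (v - w))) - (μ w + η w)) / t)
      (nhdsWithin 0 (Set.Ioi 0)) (nhds fd)) :
    fd ≤ -φw ∧ -φw < 0 := by
  have hline : HasLineDerivAt ℝ μ ⟪μ' w, v - w⟫ w (v - w) := by
    simpa only [InnerProductSpace.toDual_apply_apply] using
      (hμ w).hasFDerivAt.hasLineDerivAt (v - w)
  have hle := hline.le_of_tendsto_slope_add_convexOn hηconv (Set.mem_univ w) (Set.mem_univ v) hfd
  rw [inner_sub_right] at hle hφw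
  constructor <;> linarith

theorem PL_descent_direction
    {m : ℕ} (W : Set (EuclideanSpace ℝ (Fin m))) (hWconv : Convex ℝ W)
    (μ η : EuclideanSpace ℝ (Fin m) → ℝ)
    (μ' : EuclideanSpace ℝ (Fin m) → EuclideanSpace ℝ (Fin m))
    (hμ : ∀ x, HasGradientAt μ (μ' x) x)
    (hμconv : ConvexOn ℝ Set.univ μ)
    (hηconv : ConvexOn ℝ Set.univ η)
    (w v : EuclideanSpace ℝ (Fin m)) (hw : w ∈ W) (hv : v ∈ W)
    (hvmin : IsMinOn (fun u => (inner ℝ (μ' w) u : ℝ) + η u) W v)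
    (hne : v ≠ w)
    (φw : ℝ) (hφw : φw = (inner ℝ (μ' w) (w - v) : ℝ) + η w - η v) (hφpos : φw > 0)
    (fd : ℝ)
    (hfd : Filter.Tendsto
      (fun t : ℝ => ((μ (w + t • (v - w)) + η (w + t • (v - w))) - (μ w + η w)) / t)
      (nhdsWithin 0 (Set.Ioi 0)) (nhds fd)) :
    fd ≤ -φw ∧ -φw < 0 :=
  PL_descent_direction_general μ η μ' hμ hηconv w v φw hφw hφpos fd hfd
end
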